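/- If n ≥ 6 and C is a perfect code of Λ_n containing 0^n, then C contains no vertex of weight 1 or weight 2, and the number of weight-3 vertices in C equals |Λ_{n,2}|/3 = n(n-3)/6; in particular 3 divides n. -/

import Mathlib

def isFib {n : ℕ} (b : Fin n → Bool) : Prop :=
  ∀ i : Fin n, ∀ h : (i : ℕ) + 1 < n, ¬(b i = true ∧ b ⟨(i : ℕ) + 1, h⟩ = true)

def isLucas {n : ℕ} (b : Fin n → Bool) : Prop :=
  isFib b ∧ ∀ h0 : 0 < n, ¬(b ⟨0, h0⟩ = true ∧ b ⟨n - 1, by omega⟩ = true)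

def wt {n : ℕ} (b : Fin n → Bool) : ℕ :=
  (Finset.univ.filter fun i => b i = true).card

def lucasCube (n : ℕ) : SimpleGraph {b : Fin n → Bool // isLucas b} where
  Adj x y := hammingDist x.1 y.1 = 1
  symm := ⟨fun x y h => (hammingDist_comm y.1 x.1).trans h⟩
  loopless := ⟨fun x h => by simp only [hammingDist_self] at h; exact absurd h (by omega)⟩

def IsPerfectCode {V : Type*} (G : SimpleGraph V) (C : Set V) : Prop :=
  ∀ v : V, ∃! c : V, c ∈ C ∧ (v = c ∨ G.Adj v c)

def ch (a b : ℤ) : ℕ := if 0 ≤ a ∧ 0 ≤ b then a.toNat.choose b.toNat else 0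

/-!
The codeword `0ⁿ` dominates itself and all of `Λ_{n,1}`. Hence a codeword of weight 1 would be
dominated twice, and so would the weight-1 vertex obtained from a weight-2 codeword by deleting
a `1`. So every vertex of `Λ_{n,2}` is dominated by a codeword of weight 3, and such a codeword
dominates exactly its three weight-2 neighbours: `3 · |C ∩ Λ_{n,3}| = |Λ_{n,2}|`. Double
counting the edges between `Λ_{n,1}` (`n` vertices, each with `n - 3` neighbours in `Λ_{n,2}`) and
`Λ_{n,2}` (each vertex with two neighbours in `Λ_{n,1}`) gives `2 |Λ_{n,2}| = n (n - 3)`.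
-/

open Finset Function

section BooleanCube

variable {n : ℕ}

lemma wt_update_true {b : Fin n → Bool} {i : Fin n} (h : b i = false) :
    wt (update b i true) = wt b + 1 := by
  have : univ.filter (update b i true · = true) = insert i (univ.filter (b · = true)) := by
    ext j
    rcases eq_or_ne j i with rfl | hne <;> simp [*]
  rw [wt, this, card_insert_of_notMem (by simp [h]), wt]

lemma wt_update_false {b : Fin n → Bool} {i : Fin n} (h : b i = true) :
    wt (update b i false) + 1 = wt b := by
  have e : update (update b i false) i true = b := by simp [h]
  simpa [e] using (wt_update_true (b := update b i false) (i := i) (by simp)).symm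

lemma hammingDist_const_false (b : Fin n → Bool) : hammingDist b (fun _ => false) = wt b := by
  simp [hammingDist, wt]

lemma wt_const_false : wt (fun _ : Fin n => false) = 0 := by
  simp [wt]

lemma hammingDist_eq_one_iff {x y : Fin n → Bool} :
    hammingDist x y = 1 ↔ ∃ i, y = update x i (!x i) := by
  simp only [hammingDist, card_eq_one, eq_update_iff, eq_singleton_iff_unique_mem, mem_filter,
    mem_univ, true_and]
  refine exists_congr fun i => and_congr ?_ ⟨fun h j hj => ?_, fun h j hj => ?_⟩
  · cases x i <;> cases y i <;> simp
  · exact (not_not.1 (mt (h j) hj)).symm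
  · by_contra hne
    exact hj (h j hne).symm

lemma hammingDist_eq_one_and_wt_succ_iff {x y : Fin n → Bool} :
    hammingDist x y = 1 ∧ wt y = wt x + 1 ↔ ∃ i, x i = false ∧ y = update x i true := by
  constructor
  · rintro ⟨hd, hw⟩
    obtain ⟨i, rfl⟩ := hammingDist_eq_one_iff.1 hd
    cases hi : x i
    · exact ⟨i, hi, by simp⟩
    · have := wt_update_false hi
      simp only [hi, Bool.not_true] at hw
      omega
  · rintro ⟨i, hi, rfl⟩
    exact ⟨hammingDist_eq_one_iff.2 ⟨i, by simp [hi]⟩, wt_update_true hi⟩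

lemma hammingDist_eq_one_and_wt_succ_iff' {x y : Fin n → Bool} :
    hammingDist y x = 1 ∧ wt x = wt y + 1 ↔ ∃ i, x i = true ∧ y = update x i false := by
  rw [hammingDist_eq_one_and_wt_succ_iff]
  refine exists_congr fun i => ?_
  simp only [eq_update_iff]
  constructor
  · rintro ⟨hy, hx, h⟩
    exact ⟨hx, hy, fun j hj => (h j hj).symm⟩
  · rintro ⟨hx, hy, h⟩
    exact ⟨hy, hx, fun j hj => (h j hj).symm⟩

lemma wt_eq_or_of_hammingDist_eq_one {x y : Fin n → Bool} (h : hammingDist x y = 1) :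
    wt y = wt x + 1 ∨ wt x = wt y + 1 := by
  obtain ⟨i, rfl⟩ := hammingDist_eq_one_iff.1 h
  cases hi : x i
  · exact Or.inl (by simpa [hi] using wt_update_true hi)
  · exact Or.inr (by simpa [hi] using (wt_update_false hi).symm)

lemma exists_eq_update_of_wt_eq_one {x : Fin n → Bool} (h : wt x = 1) :
    ∃ i, x = update (fun _ => false) i true := by
  have hd : hammingDist (fun _ => false) x = 1 := by
    rw [hammingDist_comm, hammingDist_const_false, h]
  obtain ⟨i, -, hi⟩ := hammingDist_eq_one_and_wt_succ_iff.1 ⟨hd, by rw [h, wt_const_false]⟩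
  exact ⟨i, hi⟩

lemma card_up_neighbors (x : Fin n → Bool) (P : (Fin n → Bool) → Prop) [DecidablePred P] :
    #{y | (hammingDist x y = 1 ∧ wt y = wt x + 1) ∧ P y} =
      #{i | x i = false ∧ P (update x i true)} := by
  have : ({y | (hammingDist x y = 1 ∧ wt y = wt x + 1) ∧ P y} : Finset _) =
      ({i | x i = false ∧ P (update x i true)} : Finset _).image (update x · true) := by
    ext y
    simp only [hammingDist_eq_one_and_wt_succ_iff, mem_filter, mem_univ, true_and, mem_image]
    constructor
    · rintro ⟨⟨i, hi, rfl⟩, hP⟩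
      exact ⟨i, ⟨hi, hP⟩, rfl⟩
    · rintro ⟨i, ⟨hi, hP⟩, rfl⟩
      exact ⟨⟨i, hi, rfl⟩, hP⟩
  rw [this, card_image_of_injOn]
  intro i hi j _ hij
  by_contra hne
  simpa [update_of_ne hne, (mem_filter.1 hi).2.1] using congrFun hij i

lemma card_down_neighbors (x : Fin n → Bool) :
    #{y | hammingDist y x = 1 ∧ wt x = wt y + 1} = wt x := by
  have : ({y | hammingDist y x = 1 ∧ wt x = wt y + 1} : Finset _) =
      ({i | x i = true} : Finset _).image (update x · false) := by
    ext y
    rw [mem_filter_univ, hammingDist_eq_one_and_wt_succ_iff', mem_image]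
    simp only [mem_filter_univ, eq_comm (a := y)]
  rw [this, card_image_of_injOn, wt]
  intro i hi j _ hij
  by_contra hne
  simpa [update_of_ne hne, (mem_filter.1 hi).2] using congrFun hij i

end BooleanCube

section Lucas

variable {n : ℕ}

lemma isLucas_iff [NeZero n] {b : Fin n → Bool} :
    isLucas b ↔ ∀ i : Fin n, ¬(b i = true ∧ b (i + 1) = true) := by
  have hn : 0 < n := Nat.pos_of_neZero n
  have succ_of_lt {i : Fin n} (hi : (i : ℕ) + 1 < n) : i + 1 = ⟨i + 1, hi⟩ :=
    Fin.ext (by simp [Fin.val_add, Nat.mod_eq_of_lt hi])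
  have succ_last : (⟨n - 1, by omega⟩ + 1 : Fin n) = ⟨0, hn⟩ :=
    Fin.ext (by simp [Fin.val_add, Nat.sub_add_cancel hn])
  constructor
  · rintro ⟨hfib, hwrap⟩ i
    by_cases hi : (i : ℕ) + 1 < n
    · exact succ_of_lt hi ▸ hfib i hi
    · have hlast : i = ⟨n - 1, by omega⟩ := Fin.ext (by simp; omega)
      rw [hlast, succ_last]
      exact fun h => hwrap hn h.symm
  · intro h
    refine ⟨fun i hi => succ_of_lt hi ▸ h i, fun _ hw => h ⟨n - 1, by omega⟩ ?_⟩
    rw [succ_last]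
    exact hw.symm

instance : DecidablePred (isLucas (n := n)) := fun b => by
  unfold isLucas isFib; infer_instance

lemma isLucas_update_false {b : Fin n → Bool} (hb : isLucas b) (i : Fin n) :
    isLucas (update b i false) := by
  have hle : ∀ j, update b i false j = true → b j = true := fun j hj => by
    rcases eq_or_ne j i with rfl | hne
    · simp at hj
    · rwa [update_of_ne hne] at hj
  exact ⟨fun j hj hp => hb.1 j hj ⟨hle _ hp.1, hle _ hp.2⟩,
    fun h0 hp => hb.2 h0 ⟨hle _ hp.1, hle _ hp.2⟩⟩

lemma update_decide_mem (s : Finset (Fin n)) (i : Fin n) :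
    update (fun k => decide (k ∈ s)) i true = fun k => decide (k ∈ insert i s) := by
  funext k
  rcases eq_or_ne k i with rfl | hne <;> simp [*]

lemma update_const_false (i : Fin n) :
    update (fun _ => false) i true = fun k => decide (k ∈ ({i} : Finset (Fin n))) := by
  simpa using update_decide_mem ∅ i

lemma isLucas_decide_mem_iff [NeZero n] {s : Finset (Fin n)} :
    isLucas (fun k => decide (k ∈ s)) ↔ ∀ i ∈ s, i + 1 ∉ s := by
  simp [isLucas_iff]

-- The excluded positions are `i` and its cyclic neighbours `i ± 1`, distinct as `n ≥ 3`.
lemma card_isLucas_update_single (hn : 3 ≤ n) (i : Fin n) :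
    #{j | update (fun _ => false) i true j = false ∧
      isLucas (update (update (fun _ => false) i true) j true)} = n - 3 := by
  have : NeZero n := ⟨by omega⟩
  have hn1 : n ≠ 1 := by omega
  have h2 : (1 + 1 : Fin n) ≠ 0 := by
    rw [Ne, Fin.ext_iff, Fin.val_add, Fin.val_one', Nat.one_mod_eq_one.2 hn1, Fin.val_zero,
      Nat.mod_eq_of_lt (by omega)]
    omega
  have hfilter : ({j | update (fun _ => false) i true j = false ∧
      isLucas (update (update (fun _ => false) i true) j true)} : Finset _) =
      {i, i + 1, i - 1}ᶜ := by
    ext j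
    simp only [mem_filter_univ, mem_compl, update_const_false]
    rw [update_decide_mem, isLucas_decide_mem_iff]
    simp [hn1, eq_sub_iff_add_eq, eq_comm (a := j) (b := i + 1)]
    tauto
  rw [hfilter, card_compl, Fintype.card_fin, card_insert_of_notMem, card_pair]
  · simpa [eq_sub_iff_add_eq, add_assoc] using h2
  · simp [hn1, eq_sub_iff_add_eq]

end Lucas

section LucasLevel

variable {n : ℕ}

abbrev LucasVertex (n : ℕ) := {b : Fin n → Bool // isLucas b}

lemma lucasCube_adj {x y : LucasVertex n} : (lucasCube n).Adj x y ↔ hammingDist x.1 y.1 = 1 :=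
  Iff.rfl

instance : DecidableRel (lucasCube n).Adj := fun _ _ =>
  decidable_of_iff _ lucasCube_adj.symm

-- `lucasLevel n k` is `Λ_{n,k}`.
def lucasLevel (n k : ℕ) : Finset (LucasVertex n) := {v | wt v.1 = k}

@[simp]
lemma mem_lucasLevel {k : ℕ} {v : LucasVertex n} : v ∈ lucasLevel n k ↔ wt v.1 = k := by
  simp [lucasLevel]

lemma card_filter_lucasVertex (Q : (Fin n → Bool) → Prop) [DecidablePred Q] :
    #{v : LucasVertex n | Q v.1} = #{x | isLucas x ∧ Q x} := by
  rw [← card_map (Embedding.subtype isLucas)]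
  congr 1
  ext x
  simp [and_comm]

lemma card_filter_lucasLevel_adj (c : LucasVertex n) {k : ℕ} (hc : wt c.1 = k + 1) :
    #{v ∈ lucasLevel n k | (lucasCube n).Adj v c} = k + 1 := by
  simp only [lucasLevel, filter_filter, lucasCube_adj]
  rw [card_filter_lucasVertex (fun x => wt x = k ∧ hammingDist x c.1 = 1), ← hc,
    ← card_down_neighbors c.1]
  congr 1
  ext y
  simp only [mem_filter_univ]
  constructor
  · rintro ⟨-, hy, hd⟩
    exact ⟨hd, by omega⟩
  · rintro ⟨hd, hw⟩
    obtain ⟨i, -, rfl⟩ := hammingDist_eq_one_and_wt_succ_iff'.1 ⟨hd, hw⟩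
    exact ⟨isLucas_update_false c.2 i, by omega, hd⟩

lemma card_lucasLevel_one (hn : 2 ≤ n) : #(lucasLevel n 1) = n := by
  have : NeZero n := ⟨by omega⟩
  have hn1 : n ≠ 1 := by omega
  rw [lucasLevel, card_filter_lucasVertex (fun x => wt x = 1)]
  have hfilter : ({x | isLucas x ∧ wt x = 1} : Finset (Fin n → Bool)) =
      ({y | (hammingDist (fun _ => false) y = 1 ∧ wt y = wt (fun _ : Fin n => false) + 1) ∧
        isLucas y} : Finset _) := by
    ext y
    simp only [mem_filter_univ, hammingDist_comm _ y, hammingDist_const_false, wt_const_false]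
    tauto
  rw [hfilter, card_up_neighbors]
  simp only [update_const_false, isLucas_decide_mem_iff]
  simp [hn1]

lemma card_filter_lucasLevel_two_adj (hn : 3 ≤ n) (u : LucasVertex n) (hu : wt u.1 = 1) :
    #{v ∈ lucasLevel n 2 | (lucasCube n).Adj u v} = n - 3 := by
  obtain ⟨i, hi⟩ := exists_eq_update_of_wt_eq_one hu
  simp only [lucasLevel, filter_filter, lucasCube_adj]
  rw [card_filter_lucasVertex (fun x => wt x = 2 ∧ hammingDist u.1 x = 1),
    ← card_isLucas_update_single hn i, ← hi, ← card_up_neighbors]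
  congr 1
  ext y
  simp only [mem_filter_univ, hu]
  tauto

lemma card_lucasLevel_two_mul_two (hn : 3 ≤ n) : #(lucasLevel n 2) * 2 = n * (n - 3) := by
  have hedges := card_mul_eq_card_mul (lucasCube n).Adj
    (fun u hu => card_filter_lucasLevel_two_adj hn u (mem_lucasLevel.1 hu))
    (fun v hv => card_filter_lucasLevel_adj v (mem_lucasLevel.1 hv))
  rw [card_lucasLevel_one (by omega)] at hedges
  rw [hedges]

def lucasZero (n : ℕ) : LucasVertex n := ⟨fun _ => false, by constructor <;> simp [isFib]⟩

lemma lucasCube_adj_zero_iff {v : LucasVertex n} :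
    (lucasCube n).Adj v (lucasZero n) ↔ wt v.1 = 1 := by
  rw [lucasCube_adj, lucasZero, hammingDist_const_false]

end LucasLevel

lemma IsPerfectCode.eq_of_mem {V : Type*} {G : SimpleGraph V} {C : Set V}
    (hC : IsPerfectCode G C) {v c₁ c₂ : V} (h₁ : c₁ ∈ C) (h₂ : c₂ ∈ C)
    (hv₁ : v = c₁ ∨ G.Adj v c₁) (hv₂ : v = c₂ ∨ G.Adj v c₂) : c₁ = c₂ :=
  (hC v).unique ⟨h₁, hv₁⟩ ⟨h₂, hv₂⟩

namespace IsPerfectCode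

variable {n : ℕ} {C : Set (LucasVertex n)}

lemma wt_ne_one (hC : IsPerfectCode (lucasCube n) C) (h0 : lucasZero n ∈ C) {c : LucasVertex n}
    (hc : c ∈ C) : wt c.1 ≠ 1 := by
  intro h1
  have hcz := hC.eq_of_mem hc h0 (Or.inl rfl) (Or.inr (lucasCube_adj_zero_iff.2 h1))
  simp [hcz, lucasZero, wt_const_false] at h1

lemma wt_ne_two (hC : IsPerfectCode (lucasCube n) C) (h0 : lucasZero n ∈ C) {c : LucasVertex n}
    (hc : c ∈ C) : wt c.1 ≠ 2 := by
  intro h2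
  obtain ⟨i, hi⟩ := card_pos.1 (by omega : 0 < wt c.1)
  let u : LucasVertex n := ⟨update c.1 i false, isLucas_update_false c.2 i⟩
  have huc : (lucasCube n).Adj u c :=
    (hammingDist_eq_one_and_wt_succ_iff'.2 ⟨i, (mem_filter.1 hi).2, rfl⟩).1
  have hu : wt (update c.1 i false) = 1 := by
    have := wt_update_false (mem_filter.1 hi).2
    omega
  have hcz := hC.eq_of_mem hc h0 (Or.inr huc) (Or.inr (lucasCube_adj_zero_iff.2 hu))
  simp [hcz, lucasZero, wt_const_false] at h2

lemma card_filter_lucasLevel_three_mul_three [DecidablePred (· ∈ C)]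
    (hC : IsPerfectCode (lucasCube n) C) (h0 : lucasZero n ∈ C) :
    #{c ∈ lucasLevel n 3 | c ∈ C} * 3 = #(lucasLevel n 2) := by
  rw [← mul_one #(lucasLevel n 2)]
  refine card_mul_eq_card_mul (fun c v => (lucasCube n).Adj v c)
    (fun c hc => card_filter_lucasLevel_adj c (mem_lucasLevel.1 (mem_filter.1 hc).1))
    (fun v hv => card_eq_one.2 ?_)
  obtain ⟨c, ⟨hcC, hvc⟩, huniq⟩ := hC v
  have hv : wt v.1 = 2 := mem_lucasLevel.1 hv
  have hadj : (lucasCube n).Adj v c := by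
    refine hvc.resolve_left fun hvc => hC.wt_ne_two h0 hcC ?_
    rwa [← hvc]
  have hc : wt c.1 = 3 := by
    have := hC.wt_ne_one h0 hcC
    rcases wt_eq_or_of_hammingDist_eq_one hadj with h | h <;> omega
  refine ⟨c, eq_singleton_iff_unique_mem.2 ⟨?_, fun c' hc' => ?_⟩⟩
  · simp [bipartiteBelow, hc, hcC, hadj]
  · simp only [bipartiteBelow, mem_filter, mem_lucasLevel] at hc'
    exact huniq c' ⟨hc'.1.2, Or.inr hc'.2⟩

end IsPerfectCode

/-- If n ≥ 6 and C is a perfect code of Λ_n containing 0^n, then C contains no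
vertex of weight 1 or 2, the number of weight-3 vertices in C is n(n-3)/6,
and in particular 3 divides n. -/
theorem stmt12 (n : ℕ) (hn : 6 ≤ n) (C : Set {b : Fin n → Bool // isLucas b})
    (hC : IsPerfectCode (lucasCube n) C)
    (h0 : (⟨fun _ => false, by constructor <;> simp [isFib]⟩ :
        {b : Fin n → Bool // isLucas b}) ∈ C) :
    (∀ c ∈ C, wt c.1 ≠ 1 ∧ wt c.1 ≠ 2)
    ∧ {c ∈ C | wt c.1 = 3}.ncard = n * (n - 3) / 6
    ∧ 3 ∣ n := by
  classical
  have h0 : lucasZero n ∈ C := h0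
  have hC3 := hC.card_filter_lucasLevel_three_mul_three h0
  have hL2 := card_lucasLevel_two_mul_two (by omega : 3 ≤ n)
  have hncard : {c ∈ C | wt c.1 = 3}.ncard = #{c ∈ lucasLevel n 3 | c ∈ C} := by
    rw [← Set.ncard_coe_finset]
    congr 1
    ext c
    simp [and_comm]
  have hcount : n * (n - 3) = 6 * #{c ∈ lucasLevel n 3 | c ∈ C} := by
    rw [← hL2, ← hC3]
    ring
  refine ⟨fun c hc => ⟨hC.wt_ne_one h0 hc, hC.wt_ne_two h0 hc⟩, ?_, ?_⟩
  · rw [hncard, hcount]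
    omega
  · have hdvd : 3 ∣ n * (n - 3) := ⟨2 * #{c ∈ lucasLevel n 3 | c ∈ C}, by rw [hcount]; ring⟩
    rcases Nat.prime_three.dvd_mul.1 hdvd with h | h
    · exact h
    · omega
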